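/- arXiv:2202.07596 — 9 statements merged into one kernel-verified Lean document; each statement's English description precedes it below -/
import Mathlib

section
/- For any set S of conditionals over a propositional language L, the characteristic interpretation I_S = (f_S, g_S), where f_S(D) is the set of ≤-minimal elements of {B | D ⇒ B ∈ S} and g_S(D) = {A | A ⇒ D ∈ S}, satisfies exactly the conditionals in S: that is, A ⇒ B ∈ S if and only if I_S ⊩ A ⇒ B. -/
inductive Fml (n : ℕ) : Type
  | bot : Fml n
  | var : Fin n → Fml n
  | neg : Fml n → Fml n
  | and : Fml n → Fml n → Fml n
  | or  : Fml n → Fml n → Fml n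
  | imp : Fml n → Fml n → Fml n

def Fml.eval {n : ℕ} (v : Fin n → Bool) : Fml n → Bool
  | .bot => false
  | .var i => v i
  | .neg a => !(a.eval v)
  | .and a b => a.eval v && b.eval v
  | .or a b => a.eval v || b.eval v
  | .imp a b => !(a.eval v) || b.eval v

/-- A ≤ B : the implication A → B is a classical tautology. -/
def Fml.Le {n : ℕ} (A B : Fml n) : Prop :=
  ∀ v : Fin n → Bool, A.eval v = true → B.eval v = true

/-- Logical equivalence. -/
def Fml.Equiv {n : ℕ} (A B : Fml n) : Prop := A.Le B ∧ B.Le A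

/-- Strict entailment. -/
def Fml.Lt {n : ℕ} (A B : Fml n) : Prop := A.Le B ∧ ¬ B.Le A

/-- ≤-minimal elements of a set of formulas. -/
def minLe {n : ℕ} (𝒜 : Set (Fml n)) : Set (Fml n) :=
  {B ∈ 𝒜 | ¬ ∃ C ∈ 𝒜, C.Lt B}

/-- Upward closure 𝒜↑. -/
def upSet {n : ℕ} (𝒜 : Set (Fml n)) : Set (Fml n) :=
  {B | ∃ A ∈ 𝒜, A.Le B}

/-- Smyth order on sets of formulas. -/
def Smyth {n : ℕ} (𝒜 ℬ : Set (Fml n)) : Prop :=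
  ∀ B ∈ ℬ, ∃ A ∈ 𝒜, A.Le B

/-- Satisfaction of a conditional A ⇒ B by an interpretation (f, g). -/
def Sat {n : ℕ} (f g : Fml n → Set (Fml n)) (A B : Fml n) : Prop :=
  (∃ B' ∈ f A, B'.Le B) ∧ A ∈ g B

/-- (f, g) characterises S: S is exactly the set of satisfied conditionals. -/
def Characterises {n : ℕ} (f g : Fml n → Set (Fml n)) (S : Set (Fml n × Fml n)) : Prop :=
  ∀ A B : Fml n, (A, B) ∈ S ↔ Sat f g A B

/-- The characteristic f: minimal elements of {B | A ⇒ B ∈ S}. -/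
def fS {n : ℕ} (S : Set (Fml n × Fml n)) (D : Fml n) : Set (Fml n) :=
  minLe {B | (D, B) ∈ S}

/-- The characteristic g: {A | A ⇒ D ∈ S}. -/
def gS {n : ℕ} (S : Set (Fml n × Fml n)) (D : Fml n) : Set (Fml n) :=
  {A | (A, D) ∈ S}


open Finset in
private def msr {n : ℕ} (A : Fml n) : ℕ :=
  (Finset.univ.filter (fun v : Fin n → Bool => A.eval v = true)).card

private lemma msr_lt {n : ℕ} {A B : Fml n} (h : A.Lt B) : msr A < msr B := by
  obtain ⟨hle, hnle⟩ := h
  apply Finset.card_lt_card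
  constructor
  · intro v hv
    simp only [Finset.mem_filter, Finset.mem_univ, true_and] at *
    exact hle v hv
  · intro hsub
    apply hnle
    intro v hv
    have := hsub (by simp [hv] : v ∈ Finset.univ.filter (fun v => B.eval v = true))
    simpa using this

private lemma exists_min {n : ℕ} (𝒜 : Set (Fml n)) (B : Fml n) (hB : B ∈ 𝒜) :
    ∃ C ∈ minLe 𝒜, C.Le B := by
  set T : Set (Fml n) := {C | C ∈ 𝒜 ∧ C.Le B} with hT
  have hBT : B ∈ T := ⟨hB, fun v h => h⟩
  have hne : (msr '' T).Nonempty := ⟨msr B, B, hBT, rfl⟩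
  obtain ⟨C, hCT, hC⟩ := Nat.sInf_mem hne
  refine ⟨C, ⟨hCT.1, ?_⟩, hCT.2⟩
  rintro ⟨D, hD𝒜, hDC⟩
  have hDT : D ∈ T := ⟨hD𝒜, fun v h => hCT.2 v (hDC.1 v h)⟩
  have : sInf (msr '' T) ≤ msr D := Nat.sInf_le ⟨D, hDT, rfl⟩
  have := msr_lt hDC
  omega


theorem characteristic_model (n : ℕ) (S : Set (Fml n × Fml n)) :
    ∀ A B : Fml n, (A, B) ∈ S ↔ Sat (fS S) (gS S) A B := by
  intro A B
  constructor
  · intro h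
    refine ⟨?_, h⟩
    obtain ⟨C, hC, hCB⟩ := exists_min {B' | (A, B') ∈ S} B h
    exact ⟨C, hC, hCB⟩
  · intro ⟨_, h⟩
    exact h
end

section
/- A set of conditionals S is closed under Left Logical Equivalence (if A ⇒ C ∈ S and A is logically equivalent to B, then B ⇒ C ∈ S) if and only if S can be characterised (i.e., S is exactly the set of satisfied conditionals) by a conditional interpretation I = (f, g) such that f(A) = f(B) whenever A ≡ B, and g is ≡-closed (if A ∈ g(C) and B ≡ A then B ∈ g(C)). -/
theorem lle_characterisation (n : ℕ) (S : Set (Fml n × Fml n)) :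
    (∀ A B C : Fml n, (A, C) ∈ S → A.Equiv B → (B, C) ∈ S) ↔
      ∃ f g : Fml n → Set (Fml n), Characterises f g S ∧
        (∀ A B : Fml n, A.Equiv B → f A = f B) ∧
        (∀ A B C : Fml n, A ∈ g C → B.Equiv A → B ∈ g C) := by
  constructor
  · intro hLLE
    refine ⟨fun A => {B | (A, B) ∈ S}, fun B => {A | (A, B) ∈ S}, ?_, ?_, ?_⟩
    · intro A B
      constructor
      · intro h
        exact ⟨⟨B, h, fun v hv => hv⟩, h⟩
      · rintro ⟨-, h⟩
        exact h
    · intro A B hAB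
      ext C
      exact ⟨fun h => hLLE A B C h hAB, fun h => hLLE B A C h ⟨hAB.2, hAB.1⟩⟩
    · intro A B C hA hBA
      exact hLLE A B C hA ⟨hBA.2, hBA.1⟩
  · rintro ⟨f, g, hchar, hf, hg⟩ A B C hAC hAB
    rcases (hchar A C).mp hAC with ⟨⟨C', hC', hle⟩, hgA⟩
    exact (hchar B C).mpr ⟨⟨C', by rw [hf B A ⟨hAB.2, hAB.1⟩]; exact hC', hle⟩, hg A B C hgA ⟨hAB.2, hAB.1⟩⟩
end

section
/- A set of conditionals S is closed under Right Logical Equivalence (if A ⇒ B ∈ S and B ≡ C then A ⇒ C ∈ S) if and only if S can be characterised by a conditional interpretation I = (f, g) with g(A) = g(B) whenever A ≡ B. -/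
theorem rle_characterisation (n : ℕ) (S : Set (Fml n × Fml n)) :
    (∀ A B C : Fml n, (A, B) ∈ S → B.Equiv C → (A, C) ∈ S) ↔
      ∃ f g : Fml n → Set (Fml n), Characterises f g S ∧
        (∀ A B : Fml n, A.Equiv B → g A = g B) := by
  constructor
  · intro hRLE
    refine ⟨fun A => {B | (A, B) ∈ S}, fun B => {A | (A, B) ∈ S}, ?_, ?_⟩
    · intro A B
      constructor
      · intro h
        exact ⟨⟨B, h, fun v hv => hv⟩, h⟩
      · rintro ⟨_, h⟩
        exact h
    · intro A B hAB
      ext C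
      exact ⟨fun h => hRLE C A B h hAB, fun h => hRLE C B A h ⟨hAB.2, hAB.1⟩⟩
  · rintro ⟨f, g, hchar, hg⟩ A B C hAB hBC
    rw [hchar] at hAB ⊢
    obtain ⟨⟨B', hB', hle⟩, hgB⟩ := hAB
    refine ⟨⟨B', hB', fun v hv => hBC.1 v (hle v hv)⟩, ?_⟩
    rw [← hg B C hBC]
    exact hgB
end

section
/- A set of conditionals S is closed under Reflexivity (A ⇒ A ∈ S for every formula A) if and only if S can be characterised by a conditional interpretation I = (f, g) in which every formula A is a fixed point of both f and g, i.e., A ∈ f(A) and A ∈ g(A). -/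
theorem ref_characterisation (n : ℕ) (S : Set (Fml n × Fml n)) :
    (∀ A : Fml n, (A, A) ∈ S) ↔
      ∃ f g : Fml n → Set (Fml n), Characterises f g S ∧
        (∀ A : Fml n, A ∈ f A ∧ A ∈ g A) := by
  constructor
  · intro href
    refine ⟨fun A => {B | (A, B) ∈ S}, fun B => {A | (A, B) ∈ S}, ?_, ?_⟩
    · intro A B
      constructor
      · intro h
        exact ⟨⟨B, h, fun v hv => hv⟩, h⟩
      · intro h
        exact h.2
    · intro A
      exact ⟨href A, href A⟩
  · rintro ⟨f, g, hc, hfix⟩ A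
    exact (hc A A).2 ⟨⟨A, (hfix A).1, fun v hv => hv⟩, (hfix A).2⟩
end

section
/- A set of conditionals S is closed under Monotonicity (if A ⇒ C ∈ S and ⊨ B → A then B ⇒ C ∈ S) if and only if S can be characterised by a conditional interpretation I = (f, g) where f is Smyth-monotone (A ≤ B implies f(A) ⪯ f(B)) and g is ≤-closed (if A ∈ g(C) and B ≤ A then B ∈ g(C)). -/
theorem mon_characterisation (n : ℕ) (S : Set (Fml n × Fml n)) :
    (∀ A B C : Fml n, (A, C) ∈ S → B.Le A → (B, C) ∈ S) ↔
      ∃ f g : Fml n → Set (Fml n), Characterises f g S ∧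
        (∀ A B : Fml n, A.Le B → Smyth (f A) (f B)) ∧
        (∀ A B C : Fml n, A ∈ g C → B.Le A → B ∈ g C) := by
  constructor
  · intro hMon
    refine ⟨fun A => {C | (A, C) ∈ S}, fun C => {A | (A, C) ∈ S}, ?_, ?_, ?_⟩
    · intro A B
      constructor
      · intro h
        exact ⟨⟨B, h, fun v hv => hv⟩, h⟩
      · intro ⟨_, h⟩
        exact h
    · intro A B hAB C hC
      exact ⟨C, hMon B A C hC hAB, fun v hv => hv⟩
    · intro A B C hA hBA
      exact hMon A B C hA hBA
  · rintro ⟨f, g, hchar, hf, hg⟩ A B C hAC hBA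
    obtain ⟨⟨C', hC', hC'C⟩, hgA⟩ := (hchar A C).mp hAC
    obtain ⟨C'', hC'', hle⟩ := hf B A hBA C' hC'
    exact (hchar B C).mpr ⟨⟨C'', hC'', fun v hv => hC'C v (hle v hv)⟩, hg A B C hgA hBA⟩
end

section
/- A set of conditionals S is closed under Right Weakening (if A ⇒ B ∈ S and ⊨ B → C then A ⇒ C ∈ S) if and only if S can be characterised by a conditional interpretation I = (f, g) in which g is monotone with respect to ≤ in the sense that A ≤ B implies g(A) ⊆ g(B). -/
theorem rw_characterisation (n : ℕ) (S : Set (Fml n × Fml n)) :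
    (∀ A B C : Fml n, (A, B) ∈ S → B.Le C → (A, C) ∈ S) ↔
      ∃ f g : Fml n → Set (Fml n), Characterises f g S ∧
        (∀ A B : Fml n, A.Le B → g A ⊆ g B) := by
  constructor
  · intro hRW
    refine ⟨fun A => {B | (A, B) ∈ S}, fun B => {A | (A, B) ∈ S}, ?_, ?_⟩
    · intro A B
      constructor
      · intro h
        exact ⟨⟨B, h, fun v hv => hv⟩, h⟩
      · rintro ⟨⟨B', hB', hle⟩, _⟩
        exact hRW A B' B hB' hle
    · intro A B hAB X hX
      exact hRW X A B hX hAB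
  · rintro ⟨f, g, hchar, hmono⟩ A B C hAB hBC
    rw [hchar] at hAB ⊢
    obtain ⟨⟨B', hB', hle⟩, hg⟩ := hAB
    exact ⟨⟨B', hB', fun v hv => hBC v (hle v hv)⟩, hmono B C hBC hg⟩
end

section
/- A set of conditionals S is closed under Consistency Preservation (if A ⇒ B ∈ S and ⊨ ¬B then ⊨ ¬A) if and only if S can be characterised by a conditional interpretation I = (f, g) such that for every A, if some B ∈ f(A) satisfies B ≤ ⊥ then A ≤ ⊥. -/
theorem con_characterisation (n : ℕ) (S : Set (Fml n × Fml n)) :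
    (∀ A B : Fml n, (A, B) ∈ S → B.Le Fml.bot → A.Le Fml.bot) ↔
      ∃ f g : Fml n → Set (Fml n), Characterises f g S ∧
        (∀ A B : Fml n, B ∈ f A → B.Le Fml.bot → A.Le Fml.bot) := by
  constructor
  · intro hCP
    refine ⟨fun A => {B | (A, B) ∈ S}, fun B => {A | (A, B) ∈ S}, ?_, ?_⟩
    · intro A B
      constructor
      · intro h
        exact ⟨⟨B, h, fun v hv => hv⟩, h⟩
      · intro h
        exact h.2
    · intro A B hB hle
      exact hCP A B hB hle
  · rintro ⟨f, g, hchar, hcon⟩ A B hAB hle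
    obtain ⟨⟨B', hB', hB'le⟩, _⟩ := (hchar A B).mp hAB
    exact hcon A B' hB' (fun v hv => hle v (hB'le v hv))
end

section
/- A set of conditionals S is closed under Cautious Monotonicity (if A ⇒ B ∈ S and A ⇒ C ∈ S then A ∧ B ⇒ C ∈ S) if and only if S can be characterised by a conditional interpretation I = (f, g) satisfying: (1) whenever I ⊩ A ⇒ B, f(A ∧ B) ⪯ f(A) in the Smyth order; and (2) if A ∈ g(B) and A ∈ g(C) then A ∧ B ∈ g(C). -/
theorem cm_characterisation (n : ℕ) (S : Set (Fml n × Fml n)) :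
    (∀ A B C : Fml n, (A, B) ∈ S → (A, C) ∈ S → (A.and B, C) ∈ S) ↔
      ∃ f g : Fml n → Set (Fml n), Characterises f g S ∧
        (∀ A B : Fml n, Sat f g A B → Smyth (f (A.and B)) (f A)) ∧
        (∀ A B C : Fml n, A ∈ g B → A ∈ g C → A.and B ∈ g C) := by
  constructor
  · intro hCM
    refine ⟨fun A => {B | (A, B) ∈ S}, fun B => {A | (A, B) ∈ S}, ?_, ?_, ?_⟩
    · intro A B
      constructor
      · intro h
        exact ⟨⟨B, h, fun v hv => hv⟩, h⟩
      · intro h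
        exact h.2
    · rintro A B ⟨_, hAB⟩ C hAC
      exact ⟨C, hCM A B C hAB hAC, fun v hv => hv⟩
    · intro A B C hB hC
      exact hCM A B C hB hC
  · rintro ⟨f, g, hchar, h1, h2⟩ A B C hAB hAC
    rw [hchar] at hAB hAC ⊢
    obtain ⟨⟨C', hC'f, hC'le⟩, hgC⟩ := hAC
    obtain ⟨C'', hC''f, hC''le⟩ := h1 A B hAB C' hC'f
    exact ⟨⟨C'', hC''f, fun v hv => hC'le v (hC''le v hv)⟩, h2 A B C hAB.2 hgC⟩
end

section
/- A set of conditionals S is closed under Anti Right Weakening (if A ⇒ B ∈ S, ⊨ B → C, ⊨ C → D, and A ⇒ D ∈ S, then A ⇒ C ∈ S) if and only if S can be characterised by a conditional interpretation I = (f, g) satisfying: if A ∈ g(B), A ∈ g(D), and B ≤ C ≤ D, then A ∈ g(C). -/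
theorem antirw_characterisation (n : ℕ) (S : Set (Fml n × Fml n)) :
    (∀ A B C D : Fml n, (A, B) ∈ S → B.Le C → C.Le D → (A, D) ∈ S → (A, C) ∈ S) ↔
      ∃ f g : Fml n → Set (Fml n), Characterises f g S ∧
        (∀ A B C D : Fml n, A ∈ g B → A ∈ g D → B.Le C → C.Le D → A ∈ g C) := by
  constructor
  · intro h
    refine ⟨fun A => {B | (A, B) ∈ S}, fun B => {A | (A, B) ∈ S}, ?_, ?_⟩
    · intro A B
      constructor
      · intro hS
        exact ⟨⟨B, hS, fun v hv => hv⟩, hS⟩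
      · intro ⟨_, hg⟩
        exact hg
    · intro A B C D hB hD hBC hCD
      exact h A B C D hB hBC hCD hD
  · rintro ⟨f, g, hc, hg⟩ A B C D hAB hBC hCD hAD
    rw [hc] at hAB hAD ⊢
    obtain ⟨⟨B', hB', hB'B⟩, hgB⟩ := hAB
    obtain ⟨_, hgD⟩ := hAD
    exact ⟨⟨B', hB', fun v hv => hBC v (hB'B v hv)⟩, hg A B C D hgB hgD hBC hCD⟩
end
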